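/- If X and Y are independent real random variables each with the standard normal distribution N(0,1), then the ratio X/Y follows the standard Cauchy distribution, i.e., for all t, P(X/Y ≤ t) = 1/2 + (1/π)·arctan(t). -/

import Mathlib

/-!
By independence, `P(X/Y ≤ t)` is the mass the standard Gaussian on `ℝ²` gives the cone
`{x / y ≤ t}`. In polar coordinates the density `r e^{-r²/2} / (2π)` splits into a radial
factor of total mass `1 / (2π)` and the angle, so the mass is `1 / (2π)` times the length of
`{θ ∈ (-π, π) | cot θ ≤ t}`. Since `cot θ = tan (π/2 - θ)`, that set consists of two
intervals of length `π/2 + arctan t`.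
-/

open MeasureTheory ProbabilityTheory Real Set

theorem integral_Ioi_mul_exp_neg_mul_sq {b : ℝ} (hb : 0 < b) :
    ∫ r in Ioi (0 : ℝ), r * exp (-b * r ^ 2) = (2 * b)⁻¹ := by
  apply Complex.ofReal_injective
  rw [← integral_complex_ofReal]
  push_cast
  exact integral_mul_cexp_neg_mul_sq (by simpa using hb)

theorem cos_div_sin_le_iff_of_mem_Ioo_zero_pi {θ : ℝ} (t : ℝ) (hθ : θ ∈ Ioo 0 π) :
    cos θ / sin θ ≤ t ↔ π / 2 - arctan t ≤ θ := by
  have hcot : cos θ / sin θ = tan (π / 2 - θ) := by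
    rw [tan_eq_sin_div_cos, sin_pi_div_two_sub, cos_pi_div_two_sub]
  rw [hcot, ← arctan_strictMono.le_iff_le, arctan_tan (by linarith [hθ.2]) (by linarith [hθ.1]),
    sub_le_comm]

theorem cos_div_sin_le_iff_of_mem_Ioo_neg_pi_zero {θ : ℝ} (t : ℝ) (hθ : θ ∈ Ioo (-π) 0) :
    cos θ / sin θ ≤ t ↔ -(π / 2) - arctan t ≤ θ := by
  have hshift := cos_div_sin_le_iff_of_mem_Ioo_zero_pi t (θ := θ + π)
    ⟨by linarith [hθ.1], by linarith [hθ.2]⟩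
  rw [cos_add_pi, sin_add_pi, neg_div_neg_eq] at hshift
  rw [hshift]
  constructor <;> intro <;> linarith

theorem mem_Ioo_inter_cos_div_sin_le_iff {θ : ℝ} (t : ℝ) (h0 : θ ≠ 0) :
    θ ∈ Ioo (-π) π ∩ {θ | cos θ / sin θ ≤ t} ↔
      θ ∈ Ico (-(π / 2) - arctan t) 0 ∪ Ico (π / 2 - arctan t) π := by
  have := neg_pi_div_two_lt_arctan t
  have := arctan_lt_pi_div_two t
  constructor
  · rintro ⟨⟨hπ, hπ'⟩, hcot⟩
    rcases h0.lt_or_gt with hneg | hpos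
    · exact .inl ⟨(cos_div_sin_le_iff_of_mem_Ioo_neg_pi_zero t ⟨hπ, hneg⟩).1 hcot, hneg⟩
    · exact .inr ⟨(cos_div_sin_le_iff_of_mem_Ioo_zero_pi t ⟨hpos, hπ'⟩).1 hcot, hπ'⟩
  · rintro (⟨hle, hneg⟩ | ⟨hle, hπ'⟩)
    · exact ⟨⟨by linarith, by linarith⟩,
        (cos_div_sin_le_iff_of_mem_Ioo_neg_pi_zero t ⟨by linarith, hneg⟩).2 hle⟩
    · exact ⟨⟨by linarith, hπ'⟩,
        (cos_div_sin_le_iff_of_mem_Ioo_zero_pi t ⟨by linarith, hπ'⟩).2 hle⟩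

theorem volume_real_Ioo_inter_cos_div_sin_le (t : ℝ) :
    volume.real (Ioo (-π) π ∩ {θ | cos θ / sin θ ≤ t}) = π + 2 * arctan t := by
  have := neg_pi_div_two_lt_arctan t
  have := arctan_lt_pi_div_two t
  -- `cos 0 / sin 0` is the junk value `0`, but `{0}` is null.
  have hae : (Ioo (-π) π ∩ {θ | cos θ / sin θ ≤ t} : Set ℝ) =ᵐ[volume]
      (Ico (-(π / 2) - arctan t) 0 ∪ Ico (π / 2 - arctan t) π : Set ℝ) :=
    Filter.eventuallyEq_set.2 <|
      (volume.ae_ne 0).mono fun θ h0 ↦ mem_Ioo_inter_cos_div_sin_le_iff t h0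
  have hdisj : Disjoint (Ico (-(π / 2) - arctan t) 0) (Ico (π / 2 - arctan t) π) :=
    disjoint_left.2 fun θ h h' ↦ by linarith [h.2, h'.1]
  rw [measureReal_congr hae,
    measureReal_union hdisj measurableSet_Ico measure_Ico_lt_top.ne measure_Ico_lt_top.ne,
    Real.volume_real_Ico_of_le (by linarith), Real.volume_real_Ico_of_le (by linarith)]
  ring

theorem gaussianPDFReal_zero_one_mul (x y : ℝ) :
    gaussianPDFReal 0 1 x * gaussianPDFReal 0 1 y =
      (2 * π)⁻¹ * exp (-(1 / 2) * (x ^ 2 + y ^ 2)) := by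
  simp only [gaussianPDFReal, NNReal.coe_one, mul_one, sub_zero]
  rw [mul_mul_mul_comm, ← mul_inv, mul_self_sqrt (by positivity), ← exp_add]
  ring_nf

theorem measureReal_prod_gaussianReal (μ₁ μ₂ : ℝ) {v₁ v₂ : NNReal} (hv₁ : v₁ ≠ 0)
    (hv₂ : v₂ ≠ 0) {s : Set (ℝ × ℝ)} (hs : MeasurableSet s) :
    ((gaussianReal μ₁ v₁).prod (gaussianReal μ₂ v₂)).real s =
      ∫ p in s, gaussianPDFReal μ₁ v₁ p.1 * gaussianPDFReal μ₂ v₂ p.2 := by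
  rw [gaussianReal_of_var_ne_zero _ hv₁, gaussianReal_of_var_ne_zero _ hv₂,
    prod_withDensity (measurable_gaussianPDF _ _) (measurable_gaussianPDF _ _),
    ← Measure.volume_eq_prod, measureReal_def, withDensity_apply _ hs]
  have hnonneg (p : ℝ × ℝ) : 0 ≤ gaussianPDFReal μ₁ v₁ p.1 * gaussianPDFReal μ₂ v₂ p.2 :=
    mul_nonneg (gaussianPDFReal_nonneg _ _ _) (gaussianPDFReal_nonneg _ _ _)
  simp only [gaussianPDF, ← ENNReal.ofReal_mul (gaussianPDFReal_nonneg _ _ _)]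
  rw [← ofReal_integral_eq_lintegral_ofReal, ENNReal.toReal_ofReal]
  · exact setIntegral_nonneg hs fun p _ ↦ hnonneg p
  · rw [Measure.volume_eq_prod]
    exact ((integrable_gaussianPDFReal _ _).mul_prod (integrable_gaussianPDFReal _ _)).integrableOn
  · exact .of_forall hnonneg

theorem setIntegral_gaussianPDFReal_mul_div_le (t : ℝ) :
    ∫ p in {p : ℝ × ℝ | p.1 / p.2 ≤ t}, gaussianPDFReal 0 1 p.1 * gaussianPDFReal 0 1 p.2 =
      1 / 2 + (1 / π) * arctan t := by
  set S := {p : ℝ × ℝ | p.1 / p.2 ≤ t}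
  set A := {θ : ℝ | cos θ / sin θ ≤ t}
  have hS : MeasurableSet S := measurableSet_le (by fun_prop) (by fun_prop)
  have hA : MeasurableSet A := measurableSet_le (by fun_prop) (by fun_prop)
  have hpolar : ∀ p ∈ polarCoord.target,
      p.1 • S.indicator (fun q ↦ gaussianPDFReal 0 1 q.1 * gaussianPDFReal 0 1 q.2)
        (polarCoord.symm p) =
      (2 * π)⁻¹ * (p.1 * exp (-(1 / 2) * p.1 ^ 2)) * A.indicator 1 p.2 := by
    rintro ⟨r, θ⟩ ⟨hr : 0 < r, -⟩
    have hmem : polarCoord.symm (r, θ) ∈ S ↔ θ ∈ A := by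
      simp [S, A, polarCoord_symm_apply, mul_div_mul_left _ _ hr.ne']
    by_cases hθ : θ ∈ A
    · rw [indicator_of_mem (hmem.2 hθ), indicator_of_mem hθ, polarCoord_symm_apply,
        gaussianPDFReal_zero_one_mul]
      simp only [mul_pow, ← mul_add, cos_sq_add_sin_sq, mul_one, Pi.one_apply, smul_eq_mul]
      ring
    · rw [indicator_of_notMem (mt hmem.1 hθ), indicator_of_notMem hθ, smul_zero, mul_zero]
  calc ∫ p in S, gaussianPDFReal 0 1 p.1 * gaussianPDFReal 0 1 p.2
      = ∫ p in polarCoord.target,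
          p.1 • S.indicator (fun q ↦ gaussianPDFReal 0 1 q.1 * gaussianPDFReal 0 1 q.2)
            (polarCoord.symm p) := by
        rw [← integral_indicator hS, integral_comp_polarCoord_symm]
    _ = ∫ p in Ioi 0 ×ˢ Ioo (-π) π,
          (2 * π)⁻¹ * (p.1 * exp (-(1 / 2) * p.1 ^ 2)) * A.indicator 1 p.2 :=
        setIntegral_congr_fun polarCoord.open_target.measurableSet hpolar
    _ = (2 * π)⁻¹ * (∫ r in Ioi 0, r * exp (-(1 / 2) * r ^ 2)) *
          volume.real (Ioo (-π) π ∩ A) := by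
        rw [Measure.volume_eq_prod,
          setIntegral_prod_mul (fun r ↦ (2 * π)⁻¹ * (r * exp (-(1 / 2) * r ^ 2))) (A.indicator 1),
          integral_const_mul,
          integral_indicator_one hA, measureReal_restrict_apply hA, inter_comm]
    _ = 1 / 2 + (1 / π) * arctan t := by
      rw [integral_Ioi_mul_exp_neg_mul_sq (by norm_num), volume_real_Ioo_inter_cos_div_sin_le]
      field_simp

/-- The ratio of two independent standard Gaussians is standard Cauchy:
`P(X/Y ≤ t) = 1/2 + (1/π)·arctan t`. -/
theorem gaussian_ratio_cauchy {Ω : Type*} [MeasureSpace Ω]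
    [IsProbabilityMeasure (ℙ : Measure Ω)]
    (X Y : Ω → ℝ) (hXY : IndepFun X Y ℙ)
    (hX : Measure.map X ℙ = gaussianReal 0 1)
    (hY : Measure.map Y ℙ = gaussianReal 0 1) (t : ℝ) :
    (ℙ {ω | X ω / Y ω ≤ t}).toReal = 1 / 2 + (1 / π) * arctan t := by
  have hXm : AEMeasurable X ℙ := aemeasurable_of_map_neZero (by rw [hX]; infer_instance)
  have hYm : AEMeasurable Y ℙ := aemeasurable_of_map_neZero (by rw [hY]; infer_instance)
  have hmap :
      Measure.map (fun ω ↦ (X ω, Y ω)) ℙ = (gaussianReal 0 1).prod (gaussianReal 0 1) := by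
    simpa only [hX, hY] using (indepFun_iff_map_prod_eq_prod_map_map hXm hYm).1 hXY
  have hS : MeasurableSet {p : ℝ × ℝ | p.1 / p.2 ≤ t} :=
    measurableSet_le (by fun_prop) (by fun_prop)
  calc (ℙ {ω | X ω / Y ω ≤ t}).toReal
      = (Measure.map (fun ω ↦ (X ω, Y ω)) ℙ).real {p | p.1 / p.2 ≤ t} := by
        rw [measureReal_def, Measure.map_apply_of_aemeasurable (hXm.prodMk hYm) hS]
        rfl
    _ = 1 / 2 + (1 / π) * arctan t := by
        rw [hmap, measureReal_prod_gaussianReal 0 0 one_ne_zero one_ne_zero hS,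
          setIntegral_gaussianPDFReal_mul_div_le]
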